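/- arXiv:1502.02261 — 2 statements merged into one kernel-verified Lean document; each statement's English description precedes it below -/
import Mathlib

section
/- Let L > 0, β ∈ ℝ, and f ∈ H¹(T_L). Set g = Γ_β(f) = e^{−iβI(f)}f and μ = M(f)/L. Then H(f) = Im∫_{T_L} g·conj(g') dx + (1/2 − β)∫_{T_L}|g|⁴ dx + Lβμ². -/
/-!
Write `g = u f` with `u = e^{-iβV}` and `g' = u (f' - iβ(|f|² - μ) f)`. Since `|u| = 1`, pointwise
`g · conj g' = f · conj f' + iβ (|f|² - μ)|f|²`, so `Im ∫ g conj g' = Im ∫ f conj f' + β(∫|f|⁴ - μ M)`,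
while `∫|g|⁴ = ∫|f|⁴`; the remaining term `βμM = Lβμ²` closes the identity.
Integrability holds because `f` is continuous on `[0, L]` as a primitive of `f' ∈ L²`.
-/

open MeasureTheory Real Complex Filter
open scoped Topology

noncomputable section

/-- The squared `L²` norm over one period `[0,L)`; for `f` itself this is the mass `M(f)`. -/
def Mq (L : ℝ) (f : ℝ → ℂ) : ℝ := ∫ x in Set.Ioc (0:ℝ) L, ‖f x‖ ^ 2

/-- The `L⁴(T_L)` norm. -/
def L4 (L : ℝ) (f : ℝ → ℂ) : ℝ := (∫ x in Set.Ioc (0:ℝ) L, ‖f x‖ ^ 4) ^ ((1:ℝ)/4)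

/-- The `L⁶(T_L)` norm. -/
def L6 (L : ℝ) (f : ℝ → ℂ) : ℝ := (∫ x in Set.Ioc (0:ℝ) L, ‖f x‖ ^ 6) ^ ((1:ℝ)/6)

/-- `f` is an `H¹` function on the circle `T_L = ℝ/(Lℤ)` with weak derivative `fd`:
both are periodic with period `L`, `fd` is square-integrable on a period, and `f`
is the antiderivative of `fd`. -/
structure H1p (L : ℝ) (f fd : ℝ → ℂ) : Prop where
  per_f : Function.Periodic f L
  per_fd : Function.Periodic fd L
  memL2 : MemLp fd 2 (volume.restrict (Set.Ioc 0 L))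
  eq_int : ∀ x : ℝ, f x = f 0 + ∫ t in (0:ℝ)..x, fd t

/-- The `H¹(T_L)` norm of `f` (with weak derivative `fd`). -/
def H1norm (L : ℝ) (f fd : ℝ → ℂ) : ℝ := Real.sqrt (Mq L f + Mq L fd)

/-- The conserved quantity `𝓔(f) = ∫|f'|² − (1/16)∫|f|⁶ + (3/8)μ(f)∫|f|⁴`. -/
def calE (L : ℝ) (f fd : ℝ → ℂ) : ℝ :=
  Mq L fd - (1/16) * (∫ x in Set.Ioc (0:ℝ) L, ‖f x‖ ^ 6)
    + (3/8) * (Mq L f / L) * ∫ x in Set.Ioc (0:ℝ) L, ‖f x‖ ^ 4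

/-- The momentum `P(f) = Im ∫ f conj(f') − (1/4)∫|f|⁴`. -/
def momP (L : ℝ) (f fd : ℝ → ℂ) : ℝ :=
  (∫ x in Set.Ioc (0:ℝ) L, f x * (starRingEnd ℂ) (fd x)).im
    - (1/4) * ∫ x in Set.Ioc (0:ℝ) L, ‖f x‖ ^ 4

/-- The optimal Gagliardo–Nirenberg constant `C_GN = 3^{1/6} (2π)^{−1/9}`. -/
def CGN : ℝ := (3:ℝ) ^ ((1:ℝ)/6) * (2 * Real.pi) ^ (-((1:ℝ)/9))

namespace H1p

variable {L : ℝ} {f fd : ℝ → ℂ}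

theorem continuousOn_Icc (hf : H1p L f fd) : ContinuousOn f (Set.Icc 0 L) := by
  have hfd : IntegrableOn fd (Set.Icc 0 L) :=
    (integrableOn_Icc_iff_integrableOn_Ioc).2 (hf.memL2.integrable one_le_two)
  have hprim := continuousOn_const (c := f 0).add (intervalIntegral.continuousOn_primitive hfd)
  refine hprim.congr fun x hx => ?_
  rw [hf.eq_int x, intervalIntegral.integral_of_le hx.1, Pi.add_apply]

theorem integrableOn_comp {E : Type*} [NormedAddCommGroup E] (hf : H1p L f fd) {g : ℂ → E}
    (hg : Continuous g) : IntegrableOn (fun x => g (f x)) (Set.Ioc 0 L) :=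
  ((hg.comp_continuousOn hf.continuousOn_Icc).integrableOn_Icc).mono_set Set.Ioc_subset_Icc_self

theorem integrableOn_mul_conj_deriv (hf : H1p L f fd) :
    IntegrableOn (fun x => f x * starRingEnd ℂ (fd x)) (Set.Ioc 0 L) := by
  have hfd : IntegrableOn (fun x => starRingEnd ℂ (fd x)) (Set.Icc 0 L) :=
    (integrableOn_Icc_iff_integrableOn_Ioc).2 (hf.memL2.star.integrable one_le_two)
  exact (hfd.continuousOn_mul hf.continuousOn_Icc isCompact_Icc).mono_set Set.Ioc_subset_Icc_self

end H1p

theorem gauge_mul_conj_gauge_deriv (β v c : ℝ) (a b : ℂ) :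
    (exp (-(I * β * v)) * a) * starRingEnd ℂ (exp (-(I * β * v)) * (b - I * β * (c : ℂ) * a))
      = a * starRingEnd ℂ b + I * ((β * (c * ‖a‖ ^ 2) : ℝ) : ℂ) := by
  have hunit : exp (-(I * β * v)) * starRingEnd ℂ (exp (-(I * β * v))) = 1 := by
    rw [← exp_conj, ← Complex.exp_add]
    simp [conj_I]
  have hsq : a * starRingEnd ℂ a = ((‖a‖ ^ 2 : ℝ) : ℂ) := by
    rw [mul_conj, normSq_eq_norm_sq, ofReal_pow]
  calc _ = (exp (-(I * β * v)) * starRingEnd ℂ (exp (-(I * β * v))))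
          * (a * starRingEnd ℂ b + I * β * c * (a * starRingEnd ℂ a)) := by
        simp only [map_mul, map_sub, conj_I, conj_ofReal]
        ring
    _ = _ := by
        rw [hunit, hsq]
        push_cast
        ring

theorem im_integral_gauge_mul_conj_gauge_deriv {s : Set ℝ} {f fd : ℝ → ℂ} (β : ℝ)
    (v c : ℝ → ℝ) (hfd : IntegrableOn (fun x => f x * starRingEnd ℂ (fd x)) s)
    (hc : IntegrableOn (fun x => c x * ‖f x‖ ^ 2) s) :
    (∫ x in s, (exp (-(I * β * v x)) * f x) *
        starRingEnd ℂ (exp (-(I * β * v x)) * (fd x - I * β * (c x : ℂ) * f x))).im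
      = (∫ x in s, f x * starRingEnd ℂ (fd x)).im + β * ∫ x in s, c x * ‖f x‖ ^ 2 := by
  simp only [gauge_mul_conj_gauge_deriv]
  have hc' : IntegrableOn (fun x => ((β * (c x * ‖f x‖ ^ 2) : ℝ) : ℂ)) s :=
    (hc.const_mul β).ofReal
  rw [integral_add hfd (hc'.const_mul I), integral_const_mul, integral_complex_ofReal,
    integral_const_mul]
  simp

theorem statement6_general (L β : ℝ) (f fd : ℝ → ℂ) (hf : H1p L f fd)
    (V : ℝ → ℝ) :
    (∫ x in Set.Ioc (0:ℝ) L, f x * (starRingEnd ℂ) (fd x)).im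
        + (1/2) * (∫ x in Set.Ioc (0:ℝ) L, ‖f x‖ ^ 4)
      = (∫ x in Set.Ioc (0:ℝ) L,
            (Complex.exp (-(Complex.I * β * V x)) * f x) *
              (starRingEnd ℂ) (Complex.exp (-(Complex.I * β * V x)) *
                (fd x - Complex.I * β * ((‖f x‖ ^ 2 - Mq L f / L : ℝ) : ℂ) * f x))).im
        + (1/2 - β) * (∫ x in Set.Ioc (0:ℝ) L,
            ‖Complex.exp (-(Complex.I * β * V x)) * f x‖ ^ 4)
        + L * β * (Mq L f / L) ^ 2 := by
  have hnorm : ∀ x, ‖exp (-(I * β * V x)) * f x‖ = ‖f x‖ := fun x => by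
    simp [norm_exp]
  have hquartic : ∫ x in Set.Ioc 0 L, (‖f x‖ ^ 2 - Mq L f / L) * ‖f x‖ ^ 2
      = (∫ x in Set.Ioc 0 L, ‖f x‖ ^ 4) - Mq L f / L * Mq L f := by
    have h4 := hf.integrableOn_comp (g := fun z => ‖z‖ ^ 4) (by fun_prop)
    have h2 := hf.integrableOn_comp (g := fun z => ‖z‖ ^ 2) (by fun_prop)
    rw [Mq, ← integral_const_mul, ← integral_sub h4 (h2.const_mul _)]
    congr 1 with x
    ring
  rw [im_integral_gauge_mul_conj_gauge_deriv β V _ hf.integrableOn_mul_conj_deriv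
    (hf.integrableOn_comp (g := fun z => (‖z‖ ^ 2 - Mq L f / L) * ‖z‖ ^ 2) (by fun_prop)), hquartic]
  simp only [hnorm]
  rcases eq_or_ne L 0 with rfl | hL
  · -- `μ = M / 0 = 0` and all integrals over `Ioc 0 0` vanish
    simp
  · field_simp
    ring

/-- Effect of the gauge transform `Γ_β` on the Hamiltonian: with
`g = e^{−iβI(f)} f` and `μ = M(f)/L`,
`H(f) = Im∫ g conj(g') + (1/2 − β)∫|g|⁴ + Lβμ²`. Here `V = I(f)` is the mean-zero
antiderivative of `|f|² − μ`, and `gd` is the derivative of `g`. -/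
theorem statement6 (L β : ℝ) (hL : 0 < L) (f fd : ℝ → ℂ) (hf : H1p L f fd)
    (V : ℝ → ℝ) (hVper : Function.Periodic V L)
    (hVmean : (∫ x in Set.Ioc (0:ℝ) L, V x) = 0)
    (hVderiv : ∀ x : ℝ, HasDerivAt V (‖f x‖ ^ 2 - Mq L f / L) x) :
    (∫ x in Set.Ioc (0:ℝ) L, f x * (starRingEnd ℂ) (fd x)).im
        + (1/2) * (∫ x in Set.Ioc (0:ℝ) L, ‖f x‖ ^ 4)
      = (∫ x in Set.Ioc (0:ℝ) L,
            (Complex.exp (-(Complex.I * β * V x)) * f x) *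
              (starRingEnd ℂ) (Complex.exp (-(Complex.I * β * V x)) *
                (fd x - Complex.I * β * ((‖f x‖ ^ 2 - Mq L f / L : ℝ) : ℂ) * f x))).im
        + (1/2 - β) * (∫ x in Set.Ioc (0:ℝ) L,
            ‖Complex.exp (-(Complex.I * β * V x)) * f x‖ ^ 4)
        + L * β * (Mq L f / L) ^ 2 :=
  statement6_general L β f fd hf V
end
end

section
/- Let L > 0, let I ⊆ ℝ be an open interval, and let u : I × T_L → ℂ be a smooth solution of i∂_t u + ∂_x²u = i∂_x(|u|²u). Then the Hamiltonian H(u(t)) = Im∫_{T_L} u(t)·conj(∂_x u(t)) dx + (1/2)∫_{T_L}|u(t)|⁴ dx is constant in t on I. -/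
open MeasureTheory Real Complex Filter
open scoped Topology

noncomputable section

def FF (u : ℝ → ℝ → ℂ) : ℝ × ℝ → ℂ := fun p => u p.1 p.2
def PB (u : ℝ → ℝ → ℂ) : ℝ × ℝ → ℂ := fun p => fderiv ℝ (FF u) p (0, 1)
def PP (u : ℝ → ℝ → ℂ) : ℝ × ℝ → ℂ := fun p => fderiv ℝ (FF u) p (1, 0)
def PC (u : ℝ → ℝ → ℂ) : ℝ × ℝ → ℂ := fun p => fderiv ℝ (PB u) p (0, 1)
def PM (u : ℝ → ℝ → ℂ) : ℝ × ℝ → ℂ := fun p => fderiv ℝ (PB u) p (1, 0)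

variable {u : ℝ → ℝ → ℂ} {I : Set ℝ}

theorem smoothAt (hI : IsOpen I) (hs : ContDiffOn ℝ (⊤ : ℕ∞) (FF u) (I ×ˢ Set.univ))
    {t x : ℝ} (ht : t ∈ I) : ContDiffAt ℝ (⊤ : ℕ∞) (FF u) (t, x) :=
  hs.contDiffAt ((hI.prod isOpen_univ).mem_nhds ⟨ht, trivial⟩)

theorem hasDerivAt_x (hI : IsOpen I) (hs : ContDiffOn ℝ (⊤ : ℕ∞) (FF u) (I ×ˢ Set.univ))
    {t x : ℝ} (ht : t ∈ I) : HasDerivAt (u t) (PB u (t, x)) x := by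
  have h1 : HasDerivAt (fun y : ℝ => ((t, y) : ℝ × ℝ)) (0, 1) x :=
    (hasDerivAt_const x t).prodMk (hasDerivAt_id x)
  have h2 := ((smoothAt hI hs ht).differentiableAt (by simp)).hasFDerivAt.comp_hasDerivAt x h1
  exact h2

theorem hasDerivAt_t (hI : IsOpen I) (hs : ContDiffOn ℝ (⊤ : ℕ∞) (FF u) (I ×ˢ Set.univ))
    {t x : ℝ} (ht : t ∈ I) : HasDerivAt (fun s => u s x) (PP u (t, x)) t := by
  have h1 : HasDerivAt (fun s : ℝ => ((s, x) : ℝ × ℝ)) (1, 0) t :=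
    (hasDerivAt_id t).prodMk (hasDerivAt_const t x)
  have h2 : HasDerivAt (fun s => FF u (s, x)) (fderiv ℝ (FF u) (t, x) (1, 0)) t :=
    ((smoothAt hI hs ht).differentiableAt (by simp)).hasFDerivAt.comp_hasDerivAt (f := fun s => ((s, x) : ℝ × ℝ)) t h1
  exact h2

theorem contDiffAt_PB (hI : IsOpen I) (hs : ContDiffOn ℝ (⊤ : ℕ∞) (FF u) (I ×ˢ Set.univ))
    {t x : ℝ} (ht : t ∈ I) : ContDiffAt ℝ (⊤ : ℕ∞) (PB u) (t, x) := by
  have h : ContDiffAt ℝ (⊤ : ℕ∞) (fderiv ℝ (FF u)) (t, x) :=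
    (smoothAt hI hs ht).fderiv_right (m := (⊤ : ℕ∞)) (by simp)
  exact (ContinuousLinearMap.apply ℝ ℂ ((0:ℝ), (1:ℝ))).contDiff.comp_contDiffAt _ h

theorem contDiffAt_PP (hI : IsOpen I) (hs : ContDiffOn ℝ (⊤ : ℕ∞) (FF u) (I ×ˢ Set.univ))
    {t x : ℝ} (ht : t ∈ I) : ContDiffAt ℝ (⊤ : ℕ∞) (PP u) (t, x) := by
  have h : ContDiffAt ℝ (⊤ : ℕ∞) (fderiv ℝ (FF u)) (t, x) :=
    (smoothAt hI hs ht).fderiv_right (m := (⊤ : ℕ∞)) (by simp)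
  exact (ContinuousLinearMap.apply ℝ ℂ ((1:ℝ), (0:ℝ))).contDiff.comp_contDiffAt _ h

theorem hasDerivAt_xx (hI : IsOpen I) (hs : ContDiffOn ℝ (⊤ : ℕ∞) (FF u) (I ×ˢ Set.univ))
    {t x : ℝ} (ht : t ∈ I) : HasDerivAt (fun y => PB u (t, y)) (PC u (t, x)) x := by
  have h1 : HasDerivAt (fun y : ℝ => ((t, y) : ℝ × ℝ)) (0, 1) x :=
    (hasDerivAt_const x t).prodMk (hasDerivAt_id x)
  exact (((contDiffAt_PB hI hs ht).differentiableAt (by simp)).hasFDerivAt).comp_hasDerivAt x h1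

theorem hasDerivAt_xt (hI : IsOpen I) (hs : ContDiffOn ℝ (⊤ : ℕ∞) (FF u) (I ×ˢ Set.univ))
    {t x : ℝ} (ht : t ∈ I) : HasDerivAt (fun s => PB u (s, x)) (PM u (t, x)) t := by
  have h1 : HasDerivAt (fun s : ℝ => ((s, x) : ℝ × ℝ)) (1, 0) t :=
    (hasDerivAt_id t).prodMk (hasDerivAt_const t x)
  have h2 : HasDerivAt (fun s => PB u (s, x)) (fderiv ℝ (PB u) (t, x) (1, 0)) t :=
    (((contDiffAt_PB hI hs ht).differentiableAt (by simp)).hasFDerivAt).comp_hasDerivAt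
      (f := fun s => ((s, x) : ℝ × ℝ)) t h1
  exact h2

theorem fderiv_PP_eq (hI : IsOpen I) (hs : ContDiffOn ℝ (⊤ : ℕ∞) (FF u) (I ×ˢ Set.univ))
    {t x : ℝ} (ht : t ∈ I) :
    fderiv ℝ (PP u) (t, x) (0, 1) = PM u (t, x) := by
  have hsymm : IsSymmSndFDerivAt ℝ (FF u) (t, x) :=
    (smoothAt hI hs ht).isSymmSndFDerivAt (by rw [minSmoothness_of_isRCLikeNormedField]; exact WithTop.coe_le_coe.2 le_top)
  have hdf : DifferentiableAt ℝ (fderiv ℝ (FF u)) (t, x) :=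
    ((smoothAt hI hs ht).fderiv_right (m := 1) (WithTop.coe_le_coe.2 le_top)).differentiableAt one_ne_zero
  have e1 : fderiv ℝ (PP u) (t, x) (0, 1)
      = fderiv ℝ (fderiv ℝ (FF u)) (t, x) (0, 1) (1, 0) := by
    rw [show PP u = fun p => (fderiv ℝ (FF u) p) ((1:ℝ), (0:ℝ)) from rfl,
      fderiv_clm_apply hdf (differentiableAt_const _)]
    simp
  have e2 : fderiv ℝ (PB u) (t, x) (1, 0)
      = fderiv ℝ (fderiv ℝ (FF u)) (t, x) (1, 0) (0, 1) := by
    rw [show PB u = fun p => (fderiv ℝ (FF u) p) ((0:ℝ), (1:ℝ)) from rfl,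
      fderiv_clm_apply hdf (differentiableAt_const _)]
    simp
  rw [e1, hsymm.eq, ← e2]; rfl

theorem hasDerivAt_tx (hI : IsOpen I) (hs : ContDiffOn ℝ (⊤ : ℕ∞) (FF u) (I ×ˢ Set.univ))
    {t x : ℝ} (ht : t ∈ I) : HasDerivAt (fun y => PP u (t, y)) (PM u (t, x)) x := by
  have h1 : HasDerivAt (fun y : ℝ => ((t, y) : ℝ × ℝ)) (0, 1) x :=
    (hasDerivAt_const x t).prodMk (hasDerivAt_id x)
  have h2 := (((contDiffAt_PP hI hs ht).differentiableAt (by simp)).hasFDerivAt).comp_hasDerivAt x h1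
  rwa [fderiv_PP_eq hI hs ht] at h2

protected theorem HasDerivAt.complexIm {f : ℝ → ℂ} {f' : ℂ} {x : ℝ} (h : HasDerivAt f f' x) :
    HasDerivAt (fun x => (f x).im) f'.im x :=
  Complex.imCLM.hasFDerivAt.comp_hasDerivAt x h

protected theorem HasDerivAt.complexRe {f : ℝ → ℂ} {f' : ℂ} {x : ℝ} (h : HasDerivAt f f' x) :
    HasDerivAt (fun x => (f x).re) f'.re x :=
  Complex.reCLM.hasFDerivAt.comp_hasDerivAt x h

def hf (u : ℝ → ℝ → ℂ) : ℝ × ℝ → ℝ := fun p =>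
  (FF u p * star (PB u p)).im + (1/2) * ((FF u p * star (FF u p)).re) ^ 2

def Gf (u : ℝ → ℝ → ℂ) : ℝ × ℝ → ℝ := fun p =>
  (FF u p * star (PP u p)).im + (PB u p * star (PB u p)).re
    + ((FF u p * star (FF u p)).re) ^ 3
    + 2 * (FF u p * star (FF u p)).re * (FF u p * star (PB u p)).im

def Dth (u : ℝ → ℝ → ℂ) : ℝ × ℝ → ℝ := fun p =>
  (PP u p * star (PB u p) + FF u p * star (PM u p)).im
    + (FF u p * star (FF u p)).re * ((PP u p * star (FF u p) + FF u p * star (PP u p)).re)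

def DxG (u : ℝ → ℝ → ℂ) : ℝ × ℝ → ℝ := fun p =>
  (PB u p * star (PP u p) + FF u p * star (PM u p)).im
    + (PC u p * star (PB u p) + PB u p * star (PC u p)).re
    + 3 * ((FF u p * star (FF u p)).re) ^ 2
        * ((PB u p * star (FF u p) + FF u p * star (PB u p)).re)
    + 2 * (((PB u p * star (FF u p) + FF u p * star (PB u p)).re) * (FF u p * star (PB u p)).im
        + (FF u p * star (FF u p)).re * (PB u p * star (PB u p) + FF u p * star (PC u p)).im)

theorem hasDerivAt_hf (hI : IsOpen I) (hs : ContDiffOn ℝ (⊤ : ℕ∞) (FF u) (I ×ˢ Set.univ))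
    {t x : ℝ} (ht : t ∈ I) : HasDerivAt (fun s => hf u (s, x)) (Dth u (t, x)) t := by
  have hA : HasDerivAt (fun s => FF u (s, x)) (PP u (t, x)) t := hasDerivAt_t hI hs ht
  have hB : HasDerivAt (fun s => PB u (s, x)) (PM u (t, x)) t := hasDerivAt_xt hI hs ht
  have h1 := (hA.mul hB.star).complexIm
  have h2 := ((hA.mul hA.star).complexRe.pow 2).const_mul (1/2 : ℝ)
  have h3 := h1.add h2
  refine h3.congr_deriv ?_
  simp only [Dth, Pi.mul_apply]
  ring

theorem hasDerivAt_Gf (hI : IsOpen I) (hs : ContDiffOn ℝ (⊤ : ℕ∞) (FF u) (I ×ˢ Set.univ))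
    {t x : ℝ} (ht : t ∈ I) : HasDerivAt (fun y => Gf u (t, y)) (DxG u (t, x)) x := by
  have hA : HasDerivAt (fun y => FF u (t, y)) (PB u (t, x)) x := hasDerivAt_x hI hs ht
  have hB : HasDerivAt (fun y => PB u (t, y)) (PC u (t, x)) x := hasDerivAt_xx hI hs ht
  have hP : HasDerivAt (fun y => PP u (t, y)) (PM u (t, x)) x := hasDerivAt_tx hI hs ht
  have h1 := (hA.mul hP.star).complexIm
  have h2 := (hB.mul hB.star).complexRe
  have h3 := (hA.mul hA.star).complexRe.pow 3
  have h4 := (((hA.mul hA.star).complexRe.const_mul (2:ℝ)).mul ((hA.mul hB.star).complexIm))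
  have h5 := ((h1.add h2).add h3).add h4
  refine h5.congr_deriv ?_
  simp only [DxG, Pi.mul_apply]
  ring

theorem alg_key (a b c p m : ℂ)
    (hp : Complex.I * p + c = Complex.I * ((b * star a + a * star b) * a + a * star a * b)) :
    (p * star b + a * star m).im + (a * star a).re * ((p * star a + a * star p).re)
      = (b * star p + a * star m).im + (c * star b + b * star c).re
        + 3 * ((a * star a).re) ^ 2 * ((b * star a + a * star b).re)
        + 2 * (((b * star a + a * star b).re) * (a * star b).im
            + (a * star a).re * (b * star b + a * star c).im) := by
  have hp' : p = (b * star a + a * star b) * a + a * star a * b + Complex.I * c := by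
    have h2 := congrArg (fun z => -Complex.I * z) hp
    simp only [mul_add, ← mul_assoc, neg_mul, Complex.I_mul_I] at h2
    linear_combination h2
  subst hp'
  simp only [Complex.star_def, Complex.add_re, Complex.add_im, Complex.mul_re, Complex.mul_im,
    Complex.conj_re, Complex.conj_im, Complex.I_re, Complex.I_im]
  ring

theorem deriv_ut_eq (hI : IsOpen I) (hs : ContDiffOn ℝ (⊤ : ℕ∞) (FF u) (I ×ˢ Set.univ))
    {t : ℝ} (ht : t ∈ I) : deriv (u t) = fun y => PB u (t, y) :=
  funext fun y => (hasDerivAt_x hI hs ht).deriv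

theorem pde_conv (hI : IsOpen I) (hs : ContDiffOn ℝ (⊤ : ℕ∞) (FF u) (I ×ˢ Set.univ))
    (heq : ∀ t ∈ I, ∀ x : ℝ,
      Complex.I * deriv (fun s => u s x) t + deriv (deriv (u t)) x
        = Complex.I * deriv (fun y => ((‖u t y‖ ^ 2 : ℝ) : ℂ) * u t y) x)
    {t x : ℝ} (ht : t ∈ I) :
    Complex.I * PP u (t, x) + PC u (t, x)
      = Complex.I * ((PB u (t, x) * star (FF u (t, x)) + FF u (t, x) * star (PB u (t, x)))
          * FF u (t, x) + FF u (t, x) * star (FF u (t, x)) * PB u (t, x)) := by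
  have h := heq t ht x
  have e1 : deriv (fun s => u s x) t = PP u (t, x) := (hasDerivAt_t hI hs ht).deriv
  have e2 : deriv (deriv (u t)) x = PC u (t, x) := by
    rw [deriv_ut_eq hI hs ht]
    exact (hasDerivAt_xx hI hs ht).deriv
  have e3 : (fun y => ((‖u t y‖ ^ 2 : ℝ) : ℂ) * u t y)
      = fun y => FF u (t, y) * star (FF u (t, y)) * FF u (t, y) := by
    funext y
    rw [show ((‖u t y‖ ^ 2 : ℝ) : ℂ) = u t y * star (u t y) by
      rw [Complex.star_def, Complex.mul_conj]
      norm_cast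
      simp [Complex.normSq_eq_norm_sq]]
    rfl
  have hA : HasDerivAt (fun y => FF u (t, y)) (PB u (t, x)) x := hasDerivAt_x hI hs ht
  have e4 : deriv (fun y => FF u (t, y) * star (FF u (t, y)) * FF u (t, y)) x
      = (PB u (t, x) * star (FF u (t, x)) + FF u (t, x) * star (PB u (t, x))) * FF u (t, x)
        + FF u (t, x) * star (FF u (t, x)) * PB u (t, x) :=
    ((hA.mul hA.star).mul hA).deriv
  rw [e1, e2, e3, e4] at h
  exact h

theorem Dth_eq_DxG (hI : IsOpen I) (hs : ContDiffOn ℝ (⊤ : ℕ∞) (FF u) (I ×ˢ Set.univ))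
    (heq : ∀ t ∈ I, ∀ x : ℝ,
      Complex.I * deriv (fun s => u s x) t + deriv (deriv (u t)) x
        = Complex.I * deriv (fun y => ((‖u t y‖ ^ 2 : ℝ) : ℂ) * u t y) x)
    {t x : ℝ} (ht : t ∈ I) : Dth u (t, x) = DxG u (t, x) :=
  alg_key _ _ _ _ _ (pde_conv hI hs heq ht)

theorem contDiffAt_PC (hI : IsOpen I) (hs : ContDiffOn ℝ (⊤ : ℕ∞) (FF u) (I ×ˢ Set.univ))
    {t x : ℝ} (ht : t ∈ I) : ContDiffAt ℝ (⊤ : ℕ∞) (PC u) (t, x) := by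
  have h : ContDiffAt ℝ (⊤ : ℕ∞) (fderiv ℝ (PB u)) (t, x) :=
    (contDiffAt_PB hI hs ht).fderiv_right (m := (⊤ : ℕ∞)) (by simp)
  exact (ContinuousLinearMap.apply ℝ ℂ ((0:ℝ), (1:ℝ))).contDiff.comp_contDiffAt _ h

theorem contDiffAt_PM (hI : IsOpen I) (hs : ContDiffOn ℝ (⊤ : ℕ∞) (FF u) (I ×ˢ Set.univ))
    {t x : ℝ} (ht : t ∈ I) : ContDiffAt ℝ (⊤ : ℕ∞) (PM u) (t, x) := by
  have h : ContDiffAt ℝ (⊤ : ℕ∞) (fderiv ℝ (PB u)) (t, x) :=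
    (contDiffAt_PB hI hs ht).fderiv_right (m := (⊤ : ℕ∞)) (by simp)
  exact (ContinuousLinearMap.apply ℝ ℂ ((1:ℝ), (0:ℝ))).contDiff.comp_contDiffAt _ h

theorem ContinuousAt.cim {α : Type*} [TopologicalSpace α] {f : α → ℂ} {p : α}
    (h : ContinuousAt f p) : ContinuousAt (fun x => (f x).im) p :=
  Complex.continuous_im.continuousAt.comp h

theorem ContinuousAt.cre {α : Type*} [TopologicalSpace α] {f : α → ℂ} {p : α}
    (h : ContinuousAt f p) : ContinuousAt (fun x => (f x).re) p :=
  Complex.continuous_re.continuousAt.comp h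

theorem contAt_Dth (hI : IsOpen I) (hs : ContDiffOn ℝ (⊤ : ℕ∞) (FF u) (I ×ˢ Set.univ))
    {t x : ℝ} (ht : t ∈ I) : ContinuousAt (Dth u) (t, x) := by
  have c1 : ContinuousAt (FF u) (t, x) := (smoothAt hI hs ht).continuousAt
  have c2 : ContinuousAt (PB u) (t, x) := (contDiffAt_PB hI hs ht).continuousAt
  have c3 : ContinuousAt (PP u) (t, x) := (contDiffAt_PP hI hs ht).continuousAt
  have c5 : ContinuousAt (PM u) (t, x) := (contDiffAt_PM hI hs ht).continuousAt
  exact (((c3.mul c2.star).add (c1.mul c5.star)).cim).add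
    ((c1.mul c1.star).cre.mul ((c3.mul c1.star).add (c1.mul c3.star)).cre)

theorem contAt_hf (hI : IsOpen I) (hs : ContDiffOn ℝ (⊤ : ℕ∞) (FF u) (I ×ˢ Set.univ))
    {t x : ℝ} (ht : t ∈ I) : ContinuousAt (hf u) (t, x) := by
  have c1 : ContinuousAt (FF u) (t, x) := (smoothAt hI hs ht).continuousAt
  have c2 : ContinuousAt (PB u) (t, x) := (contDiffAt_PB hI hs ht).continuousAt
  exact ((c1.mul c2.star).cim).add (((c1.mul c1.star).cre.pow 2).const_mul (1/2 : ℝ))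

theorem contAt_DxG (hI : IsOpen I) (hs : ContDiffOn ℝ (⊤ : ℕ∞) (FF u) (I ×ˢ Set.univ))
    {t x : ℝ} (ht : t ∈ I) : ContinuousAt (DxG u) (t, x) := by
  have c1 : ContinuousAt (FF u) (t, x) := (smoothAt hI hs ht).continuousAt
  have c2 : ContinuousAt (PB u) (t, x) := (contDiffAt_PB hI hs ht).continuousAt
  have c3 : ContinuousAt (PP u) (t, x) := (contDiffAt_PP hI hs ht).continuousAt
  have c4 : ContinuousAt (PC u) (t, x) := (contDiffAt_PC hI hs ht).continuousAt
  have c5 : ContinuousAt (PM u) (t, x) := (contDiffAt_PM hI hs ht).continuousAt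
  exact (((((c2.mul c3.star).add (c1.mul c5.star)).cim).add
      ((c4.mul c2.star).add (c2.mul c4.star)).cre).add
    ((((c1.mul c1.star).cre.pow 2).const_mul (3:ℝ)).mul
      ((c2.mul c1.star).add (c1.mul c2.star)).cre)).add
      (((((c2.mul c1.star).add (c1.mul c2.star)).cre.mul (c1.mul c2.star).cim).add
        ((c1.mul c1.star).cre.mul ((c2.mul c2.star).add (c1.mul c4.star)).cim)).const_mul (2:ℝ))

theorem cont_slice {β : Type*} [TopologicalSpace β] {g : ℝ × ℝ → β} {t : ℝ}
    (h : ∀ x : ℝ, ContinuousAt g (t, x)) : Continuous (fun x => g (t, x)) := by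
  rw [continuous_iff_continuousAt]
  exact fun x => (h x).comp (Continuous.prodMk_right t).continuousAt

variable {L : ℝ}

theorem perB (hI : IsOpen I) (hs : ContDiffOn ℝ (⊤ : ℕ∞) (FF u) (I ×ˢ Set.univ))
    (hper : ∀ t ∈ I, ∀ x : ℝ, u t (x + L) = u t x)
    {t x : ℝ} (ht : t ∈ I) : PB u (t, x + L) = PB u (t, x) := by
  have e := deriv_ut_eq hI hs ht
  have e2 : deriv (u t) (x + L) = deriv (u t) x := by
    rw [← deriv_comp_add_const (u t) L x]
    congr 1
    funext y
    exact hper t ht y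
  calc PB u (t, x + L) = deriv (u t) (x + L) := by rw [e]
    _ = deriv (u t) x := e2
    _ = PB u (t, x) := by rw [e]

theorem perP (hI : IsOpen I) (hs : ContDiffOn ℝ (⊤ : ℕ∞) (FF u) (I ×ˢ Set.univ))
    (hper : ∀ t ∈ I, ∀ x : ℝ, u t (x + L) = u t x)
    {t x : ℝ} (ht : t ∈ I) : PP u (t, x + L) = PP u (t, x) := by
  have e1 : PP u (t, x + L) = deriv (fun s => u s (x + L)) t :=
    (hasDerivAt_t hI hs ht).deriv.symm
  have e2 : PP u (t, x) = deriv (fun s => u s x) t := (hasDerivAt_t hI hs ht).deriv.symm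
  rw [e1, e2]
  apply Filter.EventuallyEq.deriv_eq
  filter_upwards [hI.mem_nhds ht] with s hs' using hper s hs' x

theorem perG (hI : IsOpen I) (hs : ContDiffOn ℝ (⊤ : ℕ∞) (FF u) (I ×ˢ Set.univ))
    (hper : ∀ t ∈ I, ∀ x : ℝ, u t (x + L) = u t x)
    {t : ℝ} (ht : t ∈ I) : Gf u (t, L) = Gf u (t, 0) := by
  have h0 : (L : ℝ) = 0 + L := by ring
  have e1 : FF u (t, 0 + L) = FF u (t, 0) := hper t ht 0
  have e2 := perB (L := L) hI hs hper ht (x := 0)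
  have e3 := perP (L := L) hI hs hper ht (x := 0)
  rw [h0]
  simp only [Gf, e1, e2, e3]

theorem int_Dth (hI : IsOpen I) (hs : ContDiffOn ℝ (⊤ : ℕ∞) (FF u) (I ×ˢ Set.univ))
    (hper : ∀ t ∈ I, ∀ x : ℝ, u t (x + L) = u t x)
    (heq : ∀ t ∈ I, ∀ x : ℝ,
      Complex.I * deriv (fun s => u s x) t + deriv (deriv (u t)) x
        = Complex.I * deriv (fun y => ((‖u t y‖ ^ 2 : ℝ) : ℂ) * u t y) x)
    {t : ℝ} (ht : t ∈ I) : ∫ x in (0:ℝ)..L, Dth u (t, x) = 0 := by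
  have h1 : ∀ x ∈ Set.uIcc (0:ℝ) L, HasDerivAt (fun y => Gf u (t, y)) (DxG u (t, x)) x :=
    fun x _ => hasDerivAt_Gf hI hs ht
  have h2 : IntervalIntegrable (fun x => DxG u (t, x)) volume 0 L :=
    (cont_slice (fun x => contAt_DxG hI hs ht)).intervalIntegrable 0 L
  have h3 := intervalIntegral.integral_eq_sub_of_hasDerivAt h1 h2
  calc ∫ x in (0:ℝ)..L, Dth u (t, x) = ∫ x in (0:ℝ)..L, DxG u (t, x) := by
        apply intervalIntegral.integral_congr
        intro x _
        exact Dth_eq_DxG hI hs heq ht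
    _ = Gf u (t, L) - Gf u (t, 0) := h3
    _ = 0 := by rw [perG hI hs hper ht]; ring

theorem hasDerivAt_H (hI : IsOpen I) (hs : ContDiffOn ℝ (⊤ : ℕ∞) (FF u) (I ×ˢ Set.univ))
    (hper : ∀ t ∈ I, ∀ x : ℝ, u t (x + L) = u t x)
    (heq : ∀ t ∈ I, ∀ x : ℝ,
      Complex.I * deriv (fun s => u s x) t + deriv (deriv (u t)) x
        = Complex.I * deriv (fun y => ((‖u t y‖ ^ 2 : ℝ) : ℂ) * u t y) x)
    {t0 : ℝ} (ht0 : t0 ∈ I) :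
    HasDerivAt (fun t => ∫ x in (0:ℝ)..L, hf u (t, x)) 0 t0 := by
  obtain ⟨ε, hε, hball⟩ : ∃ ε > 0, Metric.closedBall t0 ε ⊆ I := by
    rcases Metric.isOpen_iff.1 hI t0 ht0 with ⟨δ, hδ, hb⟩
    exact ⟨δ/2, by positivity, (Metric.closedBall_subset_ball (by linarith)).trans hb⟩
  have hK : IsCompact (Metric.closedBall t0 ε ×ˢ Set.uIcc (0:ℝ) L) :=
    (isCompact_closedBall _ _).prod isCompact_uIcc
  have hcont : ContinuousOn (Dth u) (Metric.closedBall t0 ε ×ˢ Set.uIcc (0:ℝ) L) :=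
    fun p hp => (contAt_Dth hI hs (hball hp.1)).continuousWithinAt
  obtain ⟨C, hC⟩ := hK.exists_bound_of_continuousOn hcont
  have key := (intervalIntegral.hasDerivAt_integral_of_dominated_loc_of_deriv_le
    (F := fun t x => hf u (t, x)) (F' := fun t x => Dth u (t, x)) (bound := fun _ => C)
    (a := 0) (b := L) (μ := volume) (x₀ := t0) (Metric.ball_mem_nhds t0 hε)
    ?_ ?_ ?_ ?_ ?_ ?_).2
  · rwa [int_Dth hI hs hper heq ht0] at key
  · filter_upwards [hI.mem_nhds ht0] with s hs' using
      (cont_slice (fun x => contAt_hf hI hs hs')).aestronglyMeasurable.restrict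
  · exact (cont_slice (fun x => contAt_hf hI hs ht0)).intervalIntegrable 0 L
  · exact (cont_slice (fun x => contAt_Dth hI hs ht0)).aestronglyMeasurable.restrict
  · apply Filter.Eventually.of_forall
    intro x hx s hs'
    exact hC (s, x) ⟨Metric.ball_subset_closedBall hs', Set.uIoc_subset_uIcc hx⟩
  · exact intervalIntegrable_const
  · apply Filter.Eventually.of_forall
    intro x hx s hs'
    exact hasDerivAt_hf hI hs (hball (Metric.ball_subset_closedBall hs'))

theorem quartic_eq (z : ℂ) : ‖z‖ ^ 4 = ((z * star z).re) ^ 2 := by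
  rw [Complex.star_def, Complex.mul_conj]
  norm_cast
  rw [show ((4:ℕ) = 2 * 2) from rfl, pow_mul]
  congr 1
  simp [Complex.normSq_eq_norm_sq]

/-- conservation of the Hamiltonian. If `u` is a smooth solution of the
derivative NLS `i∂_t u + ∂_x²u = i∂_x(|u|²u)` on an open interval `I` of times, `L`-periodic
in space, then `H(u(t)) = Im∫ u conj(∂_x u) dx + (1/2)∫|u|⁴ dx` is constant on `I`. -/
theorem statement9 (L : ℝ) (hL : 0 < L) (I : Set ℝ) (hIopen : IsOpen I)
    (hIconn : I.OrdConnected) (u : ℝ → ℝ → ℂ)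
    (hper : ∀ t ∈ I, ∀ x : ℝ, u t (x + L) = u t x)
    (hsmooth : ContDiffOn ℝ (⊤ : ℕ∞) (fun p : ℝ × ℝ => u p.1 p.2) (I ×ˢ (Set.univ : Set ℝ)))
    (heq : ∀ t ∈ I, ∀ x : ℝ,
      Complex.I * deriv (fun s => u s x) t + deriv (deriv (u t)) x
        = Complex.I * deriv (fun y => ((‖u t y‖ ^ 2 : ℝ) : ℂ) * u t y) x) :
    ∀ t ∈ I, ∀ s ∈ I,
      (∫ x in Set.Ioc (0:ℝ) L, u t x * (starRingEnd ℂ) (deriv (u t) x)).im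
          + (1/2) * (∫ x in Set.Ioc (0:ℝ) L, ‖u t x‖ ^ 4)
        = (∫ x in Set.Ioc (0:ℝ) L, u s x * (starRingEnd ℂ) (deriv (u s) x)).im
          + (1/2) * (∫ x in Set.Ioc (0:ℝ) L, ‖u s x‖ ^ 4) := by
  have hs' : ContDiffOn ℝ (⊤ : ℕ∞) (FF u) (I ×ˢ Set.univ) := hsmooth
  have hrepr : ∀ t ∈ I,
      (∫ x in Set.Ioc (0:ℝ) L, u t x * (starRingEnd ℂ) (deriv (u t) x)).im
          + (1/2) * (∫ x in Set.Ioc (0:ℝ) L, ‖u t x‖ ^ 4)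
        = ∫ x in (0:ℝ)..L, hf u (t, x) := by
    intro t ht
    have hderiv := deriv_ut_eq hIopen hs' ht
    have cF : Continuous (fun x => FF u (t, x)) :=
      cont_slice (fun x => (smoothAt hIopen hs' ht).continuousAt)
    have cB : Continuous (fun x => PB u (t, x)) :=
      cont_slice (fun x => (contDiffAt_PB hIopen hs' ht).continuousAt)
    have c1 : Continuous (fun x => u t x * (starRingEnd ℂ) (deriv (u t) x)) := by
      simp only [hderiv]
      exact cF.mul cB.star
    have int1 : IntegrableOn (fun x => u t x * (starRingEnd ℂ) (deriv (u t) x))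
        (Set.Ioc 0 L) volume := c1.integrableOn_Ioc
    have e1 : (∫ x in Set.Ioc (0:ℝ) L, u t x * (starRingEnd ℂ) (deriv (u t) x)).im
        = ∫ x in Set.Ioc (0:ℝ) L, (u t x * (starRingEnd ℂ) (deriv (u t) x)).im :=
      by
      have := _root_.integral_im (μ := volume.restrict (Set.Ioc (0:ℝ) L)) int1
      exact this.symm
    have hi1 : IntervalIntegrable (fun x => (u t x * (starRingEnd ℂ) (deriv (u t) x)).im)
        volume 0 L := (Complex.continuous_im.comp c1).intervalIntegrable 0 L
    have hi2 : IntervalIntegrable (fun x => (1/2 : ℝ) * ‖u t x‖ ^ 4) volume 0 L :=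
      (continuous_const.mul ((cF.norm).pow 4)).intervalIntegrable 0 L
    calc (∫ x in Set.Ioc (0:ℝ) L, u t x * (starRingEnd ℂ) (deriv (u t) x)).im
          + (1/2) * (∫ x in Set.Ioc (0:ℝ) L, ‖u t x‖ ^ 4)
        = (∫ x in (0:ℝ)..L, (u t x * (starRingEnd ℂ) (deriv (u t) x)).im)
            + ∫ x in (0:ℝ)..L, (1/2 : ℝ) * ‖u t x‖ ^ 4 := by
          rw [intervalIntegral.integral_of_le hL.le, intervalIntegral.integral_of_le hL.le,
            e1, integral_const_mul]
      _ = ∫ x in (0:ℝ)..L, ((u t x * (starRingEnd ℂ) (deriv (u t) x)).im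
            + (1/2 : ℝ) * ‖u t x‖ ^ 4) := (intervalIntegral.integral_add hi1 hi2).symm
      _ = ∫ x in (0:ℝ)..L, hf u (t, x) := by
          apply intervalIntegral.integral_congr
          intro x _
          simp only [hf, hderiv, quartic_eq]
          rfl
  have hconst : ∀ a b : ℝ, a ∈ I → b ∈ I → a ≤ b →
      (∫ x in (0:ℝ)..L, hf u (a, x)) = (∫ x in (0:ℝ)..L, hf u (b, x)) := by
    intro a b ha hb hab
    have hIcc : Set.Icc a b ⊆ I := hIconn.out ha hb
    have hc : ContinuousOn (fun t => ∫ x in (0:ℝ)..L, hf u (t, x)) (Set.Icc a b) :=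
      fun r hr => ((hasDerivAt_H hIopen hs' hper heq (hIcc hr)).continuousAt).continuousWithinAt
    have hd : ∀ r ∈ Set.Ico a b, HasDerivWithinAt (fun t => ∫ x in (0:ℝ)..L, hf u (t, x))
        0 (Set.Ici r) r :=
      fun r hr => (hasDerivAt_H hIopen hs' hper heq (hIcc ⟨hr.1, hr.2.le⟩)).hasDerivWithinAt
    exact (constant_of_has_deriv_right_zero hc hd b (Set.right_mem_Icc.2 hab)).symm
  intro t ht s hs
  rw [hrepr t ht, hrepr s hs]
  rcases le_total t s with h | h
  · exact hconst t s ht hs h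
  · exact (hconst s t hs ht h).symm

end
end
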